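/- arXiv:2502.05678 — 3 statements merged into one kernel-verified Lean document; each statement's English description precedes it below -/
import Mathlib

section
/- An m×m matrix A over the complex zeon algebra is nilpotent if and only if its scalar-part matrix CA is nilpotent. -/
open scoped BigOperators

noncomputable section

/-- The ideal of squares of generators in the polynomial ring. -/
def zeonIdeal (n : ℕ) : Ideal (MvPolynomial (Fin n) ℂ) :=
  Ideal.span {p : MvPolynomial (Fin n) ℂ | ∃ i : Fin n, p = MvPolynomial.X i ^ 2}

/-- The `n`-particle complex zeon algebra. -/
abbrev Zeon (n : ℕ) := MvPolynomial (Fin n) ℂ ⧸ zeonIdeal n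

/-- The zeon generators. -/
def zeta (n : ℕ) (i : Fin n) : Zeon n := Ideal.Quotient.mk _ (MvPolynomial.X i)

/-- Basis blades. -/
def zetaBlade (n : ℕ) (I : Finset (Fin n)) : Zeon n := ∏ i ∈ I, zeta n i

/-- Scalar part map. -/
def scalarPart (n : ℕ) : Zeon n →+* ℂ :=
  Ideal.Quotient.lift _ (MvPolynomial.aeval (fun _ : Fin n => (0:ℂ))).toRingHom
    (fun a ha => by
      have h : zeonIdeal n ≤
          RingHom.ker (MvPolynomial.aeval (fun _ : Fin n => (0:ℂ))).toRingHom := by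
        rw [zeonIdeal, Ideal.span_le]
        rintro p ⟨i, rfl⟩
        simp [RingHom.mem_ker]
      exact h ha)

/-- Dual (nilpotent) part. -/
def dualPart (n : ℕ) (u : Zeon n) : Zeon n := u - algebraMap ℂ (Zeon n) (scalarPart n u)

/-- Conjugation on zeons: conjugate the complex coefficients, fix the generators. -/
def zconj (n : ℕ) : Zeon n →+* Zeon n :=
  Ideal.Quotient.lift _
    ((Ideal.Quotient.mk (zeonIdeal n)).comp (MvPolynomial.map (starRingEnd ℂ)))
    (fun a ha => by
      have h : zeonIdeal n ≤ RingHom.ker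
          ((Ideal.Quotient.mk (zeonIdeal n)).comp (MvPolynomial.map (starRingEnd ℂ))) := by
        rw [zeonIdeal, Ideal.span_le]
        rintro p ⟨i, rfl⟩
        simp only [Set.mem_setOf_eq, SetLike.mem_coe, RingHom.mem_ker, RingHom.comp_apply,
          map_pow, MvPolynomial.map_X]
        rw [← map_pow, Ideal.Quotient.eq_zero_iff_mem]
        exact Ideal.subset_span ⟨i, rfl⟩
      exact h ha)

end

/-!
The scalar-part map is a ring homomorphism, so nilpotency of `A` passes to `CA`. Conversely, the
kernel of the scalar-part map on zeons is generated by the generators `ζᵢ`, which square to zero,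
so it consists of nilpotents. If `CA ^ k = 0` then the entries of `A ^ k` lie in this kernel;
finitely many nilpotents of a commutative ring generate a nilpotent ideal `J`, and the entries of
`(A ^ k) ^ l` lie in `J ^ l`, so `A ^ k`, hence `A`, is nilpotent.
-/

open MvPolynomial

theorem MvPolynomial.ker_constantCoeff_le_idealOfVars {σ R : Type*} [CommSemiring R] :
    RingHom.ker (constantCoeff : MvPolynomial σ R →+* R) ≤ idealOfVars σ R := by
  intro p hp
  rw [← pow_one (idealOfVars σ R), mem_pow_idealOfVars_iff']
  intro d hd
  obtain rfl : d = 0 := by simpa [Nat.lt_one_iff, Finsupp.degree_eq_zero_iff] using hd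
  simpa [← constantCoeff_eq] using hp

theorem isNilpotent_map_iff_of_ker_isNilpotent {R S : Type*} [Semiring R] [Semiring S]
    (f : R →+* S) (h : ∀ x ∈ RingHom.ker f, IsNilpotent x) {x : R} :
    IsNilpotent (f x) ↔ IsNilpotent x := by
  refine ⟨fun ⟨k, hk⟩ => IsNilpotent.of_pow (m := k) (h _ ?_), fun hx => hx.map f⟩
  rwa [RingHom.mem_ker, map_pow]

namespace Matrix

variable {n R : Type*} [Fintype n] [DecidableEq n] [CommSemiring R]

theorem pow_apply_mem_pow_of_forall_mem {I : Ideal R} {M : Matrix n n R}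
    (hM : ∀ i j, M i j ∈ I) (k : ℕ) (i j : n) : (M ^ k) i j ∈ I ^ k := by
  induction k generalizing j with
  | zero => simp
  | succ k ih =>
    rw [pow_succ M, mul_apply, pow_succ I]
    exact Ideal.sum_mem _ fun c _ => Ideal.mul_mem_mul (ih c) (hM c j)

theorem isNilpotent_of_forall_isNilpotent {M : Matrix n n R}
    (hM : ∀ i j, IsNilpotent (M i j)) : IsNilpotent M := by
  let J : Ideal R := Ideal.span (Set.range fun p : n × n => M p.1 p.2)
  have hJ : IsNilpotent J := by
    have hfg : J.FG := Submodule.fg_span (Set.finite_range _)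
    refine hfg.isNilpotent_iff_le_nilradical.mpr ?_
    rw [Ideal.span_le, Set.range_subset_iff]
    exact fun p => hM p.1 p.2
  obtain ⟨l, hl⟩ := hJ
  refine ⟨l, ext fun i j => ?_⟩
  have h := pow_apply_mem_pow_of_forall_mem (I := J) (M := M)
    (fun i j => Ideal.subset_span ⟨(i, j), rfl⟩) l i j
  rwa [hl, Ideal.zero_eq_bot, Ideal.mem_bot] at h

end Matrix

theorem RingHom.isNilpotent_of_mem_ker_mapMatrix {n R S : Type*} [Fintype n] [DecidableEq n]
    [CommSemiring R] [Semiring S] (f : R →+* S) (h : ∀ x ∈ RingHom.ker f, IsNilpotent x) :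
    ∀ M ∈ RingHom.ker (f.mapMatrix : Matrix n n R →+* Matrix n n S), IsNilpotent M := by
  intro M hM
  refine Matrix.isNilpotent_of_forall_isNilpotent fun i j => h _ ?_
  exact congrFun (congrFun hM i) j

theorem zeta_sq (n : ℕ) (i : Fin n) : zeta n i ^ 2 = 0 :=
  Ideal.Quotient.eq_zero_iff_mem.mpr (Ideal.subset_span ⟨i, rfl⟩)

theorem scalarPart_mk (n : ℕ) (p : MvPolynomial (Fin n) ℂ) :
    scalarPart n (Ideal.Quotient.mk _ p) = constantCoeff p :=
  aeval_zero' p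

theorem isNilpotent_of_mem_ker_scalarPart (n : ℕ) :
    ∀ u ∈ RingHom.ker (scalarPart n), IsNilpotent u := by
  intro u hu
  obtain ⟨p, rfl⟩ := Ideal.Quotient.mk_surjective u
  have hvars : idealOfVars (Fin n) ℂ ≤ (nilradical (Zeon n)).comap (Ideal.Quotient.mk _) := by
    rw [Ideal.span_le, Set.range_subset_iff]
    exact fun i => ⟨2, zeta_sq n i⟩
  refine hvars (ker_constantCoeff_le_idealOfVars ?_)
  rwa [RingHom.mem_ker, ← scalarPart_mk]

/-- a zeon matrix is nilpotent iff its scalar-part matrix is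
nilpotent. -/
theorem zeon_matrix_nilpotent_iff (n m : ℕ) (A : Matrix (Fin m) (Fin m) (Zeon n)) :
    IsNilpotent A ↔ IsNilpotent (A.map (scalarPart n)) := by
  have hker := (scalarPart n).isNilpotent_of_mem_ker_mapMatrix (n := Fin m)
    (isNilpotent_of_mem_ker_scalarPart n)
  exact (isNilpotent_map_iff_of_ker_isNilpotent _ hker).symm
end

section
/- If A is an invertible m×m zeon matrix, then every zeon eigenvalue of A is invertible in CZ. -/
open scoped BigOperators

lemma scalarPart_algebraMap (n : ℕ) (c : ℂ) : scalarPart n (algebraMap ℂ (Zeon n) c) = c := by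
  have : algebraMap ℂ (Zeon n) c = Ideal.Quotient.mk _ (MvPolynomial.C c) := rfl
  rw [this]
  simp [scalarPart]

lemma nilpotent_of_scalarPart_eq_zero (n : ℕ) (u : Zeon n) (hu : scalarPart n u = 0) :
    IsNilpotent u := by
  obtain ⟨p, rfl⟩ := Ideal.Quotient.mk_surjective u
  have hc : scalarPart n (Ideal.Quotient.mk _ p) = MvPolynomial.coeff 0 p := by
    have : scalarPart n (Ideal.Quotient.mk (zeonIdeal n) p) =
        MvPolynomial.aeval (fun _ : Fin n => (0:ℂ)) p := rfl
    rw [this, MvPolynomial.aeval_zero']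
    rfl
  rw [hc] at hu
  -- p with zero constant coefficient lies in the span of the variables
  have hp : p ∈ Ideal.span (MvPolynomial.X '' (Set.univ : Set (Fin n)) :
      Set (MvPolynomial (Fin n) ℂ)) := by
    rw [MvPolynomial.mem_ideal_span_X_image]
    intro mo hmo
    by_contra hcon
    push_neg at hcon
    have : mo = 0 := by
      ext i
      simpa using hcon i (Set.mem_univ i)
    rw [this] at hmo
    exact (MvPolynomial.mem_support_iff.mp hmo) hu
  -- the quotient of this span lies in the nilradical
  have hmem : (Ideal.Quotient.mk (zeonIdeal n)) p ∈ nilradical (Zeon n) := by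
    have hle : Ideal.map (Ideal.Quotient.mk (zeonIdeal n))
        (Ideal.span (MvPolynomial.X '' (Set.univ : Set (Fin n)) :
          Set (MvPolynomial (Fin n) ℂ))) ≤ nilradical (Zeon n) := by
      rw [Ideal.map_span, Ideal.span_le]
      rintro q ⟨r, ⟨i, -, rfl⟩, rfl⟩
      simp only [SetLike.mem_coe, mem_nilradical]
      refine ⟨2, ?_⟩
      rw [← map_pow, Ideal.Quotient.eq_zero_iff_mem]
      exact Ideal.subset_span ⟨i, rfl⟩
    exact hle (Ideal.mem_map_of_mem _ hp)
  exact hmem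

/-- every zeon eigenvalue of an invertible zeon matrix is
invertible. -/
theorem zeon_eigenvalue_isUnit (n m : ℕ) (A : Matrix (Fin m) (Fin m) (Zeon n))
    (hA : IsUnit A) (lam : Zeon n) (ξ : Fin m → Zeon n)
    (hξ : ∃ i, scalarPart n (ξ i) ≠ 0)
    (h : A.mulVec ξ = lam • ξ) :
    IsUnit lam := by
  -- scalar part of lam is nonzero
  have hAs : IsUnit (A.map (scalarPart n)) := by
    have := hA.map (RingHom.mapMatrix (scalarPart n) : Matrix (Fin m) (Fin m) (Zeon n) →+* _)
    exact this
  have hlam : scalarPart n lam ≠ 0 := by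
    intro h0
    have heq : (A.map (scalarPart n)).mulVec (fun i => scalarPart n (ξ i)) = 0 := by
      funext i
      have := congrFun h i
      have h2 := (RingHom.map_mulVec (scalarPart n) A ξ i).symm
      rw [this] at h2
      simp only [Pi.smul_apply, smul_eq_mul, map_mul, h0, zero_mul] at h2
      exact h2
    obtain ⟨B, hB⟩ := hAs.exists_left_inv
    have : (fun i => scalarPart n (ξ i)) = 0 := by
      have := congrArg (fun v => B.mulVec v) heq
      simpa [Matrix.mulVec_mulVec, hB] using this
    obtain ⟨i, hi⟩ := hξ
    exact hi (congrFun this i)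
  -- now lam = scalar + nilpotent
  have hd : IsNilpotent (dualPart n lam) := by
    apply nilpotent_of_scalarPart_eq_zero
    simp [dualPart, scalarPart_algebraMap]
  have hu : IsUnit (algebraMap ℂ (Zeon n) (scalarPart n lam)) :=
    (IsUnit.mk0 _ hlam).map (algebraMap ℂ (Zeon n))
  have : lam = algebraMap ℂ (Zeon n) (scalarPart n lam) + dualPart n lam := by
    simp [dualPart]
  rw [this]
  exact hd.isUnit_add_left_of_commute hu (Commute.all _ _)
end

section
/- Let Ψ be the nilpotent adjacency matrix of a simple graph G on m vertices and k a positive integer. Then for each vertex i, the (i,i) entry of Ψ^k equals Σ_{I ⊆ V, |I| = k} ω_I ζ_I, where ω_I is the number of k-cycles in G based at v_i on vertex set I. -/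
open scoped BigOperators

noncomputable section

/-- Nilpotent adjacency matrix of a simple graph. -/
def nilAdj {m : ℕ} (G : SimpleGraph (Fin m)) [DecidableRel G.Adj] :
    Matrix (Fin m) (Fin m) (Zeon m) :=
  fun i j => if G.Adj i j then zeta m j else 0

/-- Conjugate transpose of the nilpotent adjacency matrix. -/
def nilAdjDag {m : ℕ} (G : SimpleGraph (Fin m)) [DecidableRel G.Adj] :
    Matrix (Fin m) (Fin m) (Zeon m) :=
  fun i j => zconj m (nilAdj G j i)

/-- The zeon combinatorial Laplacian. -/
def zeonLaplacian {m : ℕ} (G : SimpleGraph (Fin m)) [DecidableRel G.Adj] :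
    Matrix (Fin m) (Fin m) (Zeon m) :=
  Matrix.diagonal (fun i => (G.degree i : Zeon m)) - nilAdj G

/-- Number of `k`-cycles based at `i` whose vertex set is `I`: closed walks
`c 0 = i, c 1, ..., c k = i` whose first `k` vertices are pairwise distinct and
have image exactly `I`. -/
def numCycles {m : ℕ} (G : SimpleGraph (Fin m)) [DecidableRel G.Adj]
    (i : Fin m) (k : ℕ) (I : Finset (Fin m)) : ℕ :=
  (Finset.univ.filter (fun c : Fin (k + 1) → Fin m =>
    c 0 = i ∧ c (Fin.last k) = i ∧
    (∀ j : Fin k, G.Adj (c j.castSucc) (c j.succ)) ∧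
    (∀ a b : Fin k, c a.castSucc = c b.castSucc → a = b) ∧
    Finset.image (fun j : Fin k => c j.castSucc) Finset.univ = I)).card

end

/-!
Expanding the matrix power, `(Ψ ^ k) i i` is a sum over closed walks `i = c 0, …, c k = i` of
the product of the generators `ζ_{c 1} ⋯ ζ_{c k}` of the vertices entered along the walk. Since
`ζ_j ^ 2 = 0`, only walks entering pairwise distinct vertices survive, and each contributes the
blade of those vertices. For a closed walk, the entered vertices `c 1, …, c k` are a rotation of
the departed ones `c 0, …, c (k - 1)`, so the surviving walks are exactly the `k`-cycles based at
`i`, and grouping them by vertex set gives the formula.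
-/

open Finset

theorem Matrix.pow_apply_eq_sum_prod {n R : Type*} [Fintype n] [DecidableEq n] [CommSemiring R]
    (M : Matrix n n R) (k : ℕ) (i j : n) :
    (M ^ k) i j = ∑ c : Fin (k + 1) → n with c 0 = i ∧ c (Fin.last k) = j,
      ∏ t : Fin k, M (c t.castSucc) (c t.succ) := by
  rw [sum_filter]
  induction k generalizing i with
  | zero =>
    rw [pow_zero, Matrix.one_apply, ← (Equiv.funUnique (Fin 1) n).symm.sum_comp]
    simp [ite_and, -sum_boole]
  | succ k ih =>
    rw [pow_succ', Matrix.mul_apply, ← (Fin.consEquiv fun _ => n).sum_comp,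
      Fintype.sum_prod_type]
    simp only [ih, ite_and, mul_sum, mul_ite, mul_zero, Fin.consEquiv, Equiv.coe_fn_mk,
      Fin.cons_zero, ← Fin.succ_last, Fin.cons_succ, Fin.prod_univ_succ, Fin.castSucc_zero,
      Fin.castSucc_succ, sum_ite_irrel, sum_const_zero, sum_ite_eq', mem_univ, ↓reduceIte]
    rw [sum_comm]
    simp

theorem Fin.apply_succ_eq_apply_castSucc_finRotate {α : Type*} {k : ℕ} (c : Fin (k + 1) → α)
    (hc : c (Fin.last k) = c 0) (t : Fin k) : c t.succ = c (finRotate k t).castSucc := by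
  cases k with
  | zero => exact t.elim0
  | succ k =>
    obtain rfl | ht := eq_or_ne t (Fin.last k)
    · rw [finRotate_last, Fin.succ_last, Fin.castSucc_zero, hc]
    · congr 1
      ext
      rw [Fin.val_succ, Fin.val_castSucc, coe_finRotate_of_ne_last ht]

theorem Fin.prod_apply_succ_eq_prod_apply_castSucc {α M : Type*} [CommMonoid M] {k : ℕ}
    (c : Fin (k + 1) → α) (hc : c (Fin.last k) = c 0) (f : α → M) :
    ∏ t : Fin k, f (c t.succ) = ∏ t : Fin k, f (c t.castSucc) :=
  Fintype.prod_equiv (finRotate k) _ _ fun t => by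
    rw [Fin.apply_succ_eq_apply_castSucc_finRotate c hc]

theorem zeta_mul_self (n : ℕ) (i : Fin n) : zeta n i * zeta n i = 0 := by
  rw [zeta, ← map_mul, ← sq, Ideal.Quotient.eq_zero_iff_mem]
  exact Ideal.subset_span ⟨i, rfl⟩

theorem prod_zeta_comp {ι : Type*} [Fintype ι] [DecidableEq ι] {n : ℕ} (f : ι → Fin n) :
    ∏ t, zeta n (f t) = if Function.Injective f then zetaBlade n (univ.image f) else 0 := by
  split_ifs with hf
  · rw [zetaBlade, prod_image fun a _ b _ hab => hf hab]
  · obtain ⟨a, b, hab, hne⟩ := Function.not_injective_iff.mp hf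
    rw [← mul_prod_erase univ _ (mem_univ a),
      ← mul_prod_erase _ _ (mem_erase.mpr ⟨hne.symm, mem_univ b⟩), ← mul_assoc, hab,
      zeta_mul_self, zero_mul]

section Cycles

variable {m : ℕ} (G : SimpleGraph (Fin m)) [DecidableRel G.Adj]

def basedCycles (i : Fin m) (k : ℕ) : Finset (Fin (k + 1) → Fin m) :=
  {c | c 0 = i ∧ c (Fin.last k) = i ∧ (∀ t : Fin k, G.Adj (c t.castSucc) (c t.succ)) ∧
    Function.Injective (fun t : Fin k => c t.castSucc)}

theorem numCycles_eq_card_basedCycles (i : Fin m) (k : ℕ) (I : Finset (Fin m)) :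
    numCycles G i k I =
      #{c ∈ basedCycles G i k | univ.image (fun t : Fin k => c t.castSucc) = I} := by
  rw [numCycles, basedCycles, filter_filter]
  congr 1
  ext c
  simp only [mem_filter, and_assoc]
  rfl

theorem sum_numCycles_mul_zetaBlade (i : Fin m) (k : ℕ) :
    ∑ I : Finset (Fin m) with I.card = k, (numCycles G i k I : Zeon m) * zetaBlade m I =
      ∑ c ∈ basedCycles G i k, zetaBlade m (univ.image (fun t : Fin k => c t.castSucc)) := by
  calc _ = ∑ I : Finset (Fin m) with I.card = k,
        ∑ c ∈ basedCycles G i k with univ.image (fun t : Fin k => c t.castSucc) = I,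
          zetaBlade m (univ.image (fun t : Fin k => c t.castSucc)) := by
        refine sum_congr rfl fun I _ => ?_
        rw [numCycles_eq_card_basedCycles, ← nsmul_eq_mul, ← sum_const]
        exact sum_congr rfl fun c hc => by rw [(mem_filter.mp hc).2]
    _ = _ := sum_fiberwise_of_maps_to (fun c hc => by
        rw [mem_filter, card_image_of_injective _ (mem_filter.mp hc).2.2.2.2]
        simp) _

theorem prod_nilAdj_of_closed {k : ℕ} (c : Fin (k + 1) → Fin m) (hc : c (Fin.last k) = c 0) :
    ∏ t : Fin k, nilAdj G (c t.castSucc) (c t.succ) =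
      if (∀ t : Fin k, G.Adj (c t.castSucc) (c t.succ)) ∧
        Function.Injective (fun t : Fin k => c t.castSucc)
      then zetaBlade m (univ.image (fun t : Fin k => c t.castSucc)) else 0 := by
  simp only [nilAdj]
  rw [Fintype.prod_ite_zero, Fin.prod_apply_succ_eq_prod_apply_castSucc c hc (zeta m),
    prod_zeta_comp, ite_and]
  congr -- the two sides differ only in their `Decidable` instances

end Cycles

theorem nilAdj_pow_diag_general (m : ℕ) (G : SimpleGraph (Fin m)) [DecidableRel G.Adj]
    (i : Fin m) (k : ℕ) :
    (nilAdj G ^ k) i i =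
      ∑ I ∈ Finset.univ.filter (fun I : Finset (Fin m) => I.card = k),
        (numCycles G i k I : Zeon m) * zetaBlade m I := by
  rw [sum_numCycles_mul_zetaBlade, Matrix.pow_apply_eq_sum_prod]
  calc _ = ∑ c : Fin (k + 1) → Fin m with c 0 = i ∧ c (Fin.last k) = i,
        if (∀ t : Fin k, G.Adj (c t.castSucc) (c t.succ)) ∧
          Function.Injective (fun t : Fin k => c t.castSucc)
        then zetaBlade m (univ.image (fun t : Fin k => c t.castSucc)) else 0 :=
      sum_congr rfl fun c hc => by
        obtain ⟨h0, hlast⟩ := (mem_filter.mp hc).2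
        exact prod_nilAdj_of_closed G c (hlast.trans h0.symm)
    _ = _ := by
      rw [← sum_filter, filter_filter]
      simp only [basedCycles, and_assoc]

/-- the `(i,i)` entry of `Ψ^k` enumerates the `k`-cycles based
at `vᵢ`, organized by their vertex sets. -/
theorem nilAdj_pow_diag (m : ℕ) (G : SimpleGraph (Fin m)) [DecidableRel G.Adj]
    (i : Fin m) (k : ℕ) (hk : 0 < k) :
    (nilAdj G ^ k) i i =
      ∑ I ∈ Finset.univ.filter (fun I : Finset (Fin m) => I.card = k),
        (numCycles G i k I : Zeon m) * zetaBlade m I :=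
  nilAdj_pow_diag_general m G i k
end
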